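/- arXiv:0704.3935 — 4 statements merged into one kernel-verified Lean document; each statement's English description precedes it below -/
import Mathlib

section
/- Let n ≥ 2, let Γ₁, …, Γₙ be arbitrary groups and let S be a subgroup of Γ₁ × ⋯ × Γₙ. For each i let p_i : S → Γ_i be the restriction of the i-th coordinate projection, let K_i = ker(p_i), let N_{i,j} = p_j(K_i) (a subgroup of Γ_j), and let L_j = S ∩ Γ_j. Then for every j, the left-normed iterated commutator subgroup [N_{1,j}, N_{2,j}, …, N_{j−1,j}, N_{j+1,j}, …, N_{n,j}] (the (n−1)-fold commutator of the subgroups N_{i,j} over all i ≠ j, bracketed from the left) is contained in L_j. -/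
/-!
An element of `S` lying in every kernel `ker p_i` with `i ≠ j` is supported on the single
coordinate `j`, so its `j`-th coordinate lies in `L_j`. The commutator of the normal subgroups
`ker p_i` (`i ≠ j`) lies in each of them, and its image under `p_j` is the commutator of the
images `N_{i,j}`.
-/

noncomputable section

universe u

/-- The left-normed iterated commutator `[[…[[H₁, H₂], H₃], …], H_m]` of a list of subgroups
(`⊥` for the empty list). -/
def leftNormedCommutator {G : Type u} [Group G] : List (Subgroup G) → Subgroup G
  | [] => ⊥
  | H :: t => t.foldl (fun A B => ⁅A, B⁆) H

section LeftNormedCommutator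

variable {G G' : Type*} [Group G] [Group G']

theorem foldl_commutator_map (f : G →* G') (t : List (Subgroup G)) (A : Subgroup G) :
    (t.map (Subgroup.map f)).foldl (fun X Y => ⁅X, Y⁆) (A.map f)
      = (t.foldl (fun X Y => ⁅X, Y⁆) A).map f := by
  induction t generalizing A with
  | nil => rfl
  | cons C t ih => simp only [List.map_cons, List.foldl_cons, ← Subgroup.map_commutator, ih]

theorem leftNormedCommutator_map (f : G →* G') (L : List (Subgroup G)) :
    leftNormedCommutator (L.map (Subgroup.map f)) = (leftNormedCommutator L).map f := by
  cases L with
  | nil => exact (Subgroup.map_bot f).symm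
  | cons A t => exact foldl_commutator_map f t A

theorem foldl_commutator_le_of_mem (t : List (Subgroup G)) (A : Subgroup G) [A.Normal]
    (ht : ∀ C ∈ t, C.Normal) {B : Subgroup G} (hB : B ∈ A :: t) :
    t.foldl (fun X Y => ⁅X, Y⁆) A ≤ B := by
  induction t generalizing A B with
  | nil => exact (List.mem_singleton.mp hB).ge
  | cons C t ih =>
    have : C.Normal := ht C List.mem_cons_self
    have ht' : ∀ D ∈ t, D.Normal := fun D hD => ht D (List.mem_cons_of_mem _ hD)
    have hAC : t.foldl (fun X Y => ⁅X, Y⁆) ⁅A, C⁆ ≤ ⁅A, C⁆ := ih _ ht' List.mem_cons_self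
    simp only [List.mem_cons] at hB
    rcases hB with rfl | rfl | hB
    · exact hAC.trans (Subgroup.commutator_le_left _ _)
    · exact hAC.trans (Subgroup.commutator_le_right _ _)
    · exact ih _ ht' (List.mem_cons_of_mem _ hB)

theorem leftNormedCommutator_le_of_mem {L : List (Subgroup G)} (hL : ∀ A ∈ L, A.Normal)
    {B : Subgroup G} (hB : B ∈ L) : leftNormedCommutator L ≤ B := by
  cases L with
  | nil => cases hB
  | cons A t =>
    have : A.Normal := hL A List.mem_cons_self
    exact foldl_commutator_le_of_mem t A (fun C hC => hL C (List.mem_cons_of_mem _ hC)) hB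

end LeftNormedCommutator

theorem Subgroup.map_iInf_ker_eval_le_comap_mulSingle {ι : Type*} [DecidableEq ι]
    {Γ : ι → Type*} [∀ i, Group (Γ i)] (S : Subgroup (∀ i, Γ i)) (j : ι) :
    (⨅ (i) (_ : i ≠ j), ((Pi.evalMonoidHom Γ i).comp S.subtype).ker).map
        ((Pi.evalMonoidHom Γ j).comp S.subtype)
      ≤ S.comap (MonoidHom.mulSingle Γ j) := by
  rintro _ ⟨s, hs, rfl⟩
  have hsupp : ∀ i ≠ j, (s : ∀ i, Γ i) i = 1 := fun i hi =>
    Subgroup.mem_iInf.mp (Subgroup.mem_iInf.mp hs i) hi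
  have hs_eq : Pi.mulSingle j ((s : ∀ i, Γ i) j) = s := by
    funext i
    by_cases h : i = j
    · subst h; simp
    · simp [h, hsupp i h]
  change Pi.mulSingle j ((s : ∀ i, Γ i) j) ∈ S
  rw [hs_eq]
  exact s.2

theorem leftNormedCommutator_of_projected_kernels_le_intersection_general
    (n : ℕ) (Γ : Fin n → Type u) [∀ i, Group (Γ i)]
    (S : Subgroup (∀ i, Γ i))
    (p : ∀ i : Fin n, ↥S →* Γ i)
    (hp : ∀ i, p i = (Pi.evalMonoidHom Γ i).comp S.subtype)
    (j : Fin n) :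
    leftNormedCommutator
        (((List.finRange n).filter (fun i => decide (i ≠ j))).map
          (fun i => (MonoidHom.ker (p i)).map (p j)))
      ≤ S.comap (MonoidHom.mulSingle Γ j) := by
  obtain rfl : p = fun i => (Pi.evalMonoidHom Γ i).comp S.subtype := funext hp
  set l := (List.finRange n).filter (fun i => decide (i ≠ j))
  set K := fun i => ((Pi.evalMonoidHom Γ i).comp S.subtype).ker
  have hK_le : leftNormedCommutator (l.map K) ≤ ⨅ (i) (_ : i ≠ j), K i :=
    le_iInf₂ fun i hi => leftNormedCommutator_le_of_mem
      (by simp only [List.mem_map]; rintro _ ⟨k, -, rfl⟩; exact MonoidHom.normal_ker _)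
      (List.mem_map_of_mem (List.mem_filter.mpr ⟨List.mem_finRange i, by simpa using hi⟩))
  calc leftNormedCommutator (l.map fun i => (K i).map ((Pi.evalMonoidHom Γ j).comp S.subtype))
      = (leftNormedCommutator (l.map K)).map ((Pi.evalMonoidHom Γ j).comp S.subtype) := by
        rw [← leftNormedCommutator_map, List.map_map]; rfl
    _ ≤ (⨅ (i) (_ : i ≠ j), K i).map ((Pi.evalMonoidHom Γ j).comp S.subtype) :=
        Subgroup.map_mono hK_le
    _ ≤ S.comap (MonoidHom.mulSingle Γ j) := S.map_iInf_ker_eval_le_comap_mulSingle j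

/-- **Lemma 5.1.** Let `Γ₁, …, Γₙ` (`n ≥ 2`) be arbitrary groups, `S ⊆ Γ₁ × ⋯ × Γₙ` a
subgroup, `p_i : S → Γ_i` the coordinate projections, `K_i = ker p_i`, `N_{i,j} = p_j(K_i)`
and `L_j = S ∩ Γ_j`.  Then the left-normed commutator
`[N_{1,j}, …, N_{j-1,j}, N_{j+1,j}, …, N_{n,j}]` is contained in `L_j`. -/
theorem leftNormedCommutator_of_projected_kernels_le_intersection
    (n : ℕ) (hn : 2 ≤ n) (Γ : Fin n → Type u) [∀ i, Group (Γ i)]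
    (S : Subgroup (∀ i, Γ i))
    (p : ∀ i : Fin n, ↥S →* Γ i)
    (hp : ∀ i, p i = (Pi.evalMonoidHom Γ i).comp S.subtype)
    (j : Fin n) :
    leftNormedCommutator
        (((List.finRange n).filter (fun i => decide (i ≠ j))).map
          (fun i => (MonoidHom.ker (p i)).map (p j)))
      ≤ S.comap (MonoidHom.mulSingle Γ j) :=
  leftNormedCommutator_of_projected_kernels_le_intersection_general n Γ S p hp j
end
end

section
/- Let G be a finitely generated virtually nilpotent group and let S be a subgroup of G. Then there exist an integer r ≥ 0 and a chain of subgroups S₀ ≤ S₁ ≤ ⋯ ≤ S_r = G such that S₀ has finite index in S, S_i is normal in S_{i+1} for each i < r, and each quotient group S_{i+1}/S_i is either finite or cyclic. -/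
/-!
The normal core `N` of a nilpotent subgroup of finite index is nilpotent, normal of finite
index, and finitely generated by Schreier's lemma; the last link `N ◁ G` of the chain has finite
quotient. Below `N`, the subgroups `(S ⊓ N) ⊔ γᵢ(N)` of the lower central series descend from
`N` to `S ⊓ N`. Each `γᵢ(N)` is generated modulo `γᵢ₊₁(N)` by finitely many elements, namely
iterated commutators of generators of `N`, and these commute with all of `N` modulo `γᵢ₊₁(N)`.
Adjoining them one at a time, each new element normalizes the subgroup built so far, so every
quotient is cyclic.
-/

universe u

theorem Relation.ReflTransGen.exists_fin_chain {α : Type*} {r : α → α → Prop} {a b : α}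
    (h : Relation.ReflTransGen r a b) :
    ∃ (n : ℕ) (c : Fin (n + 1) → α), c 0 = a ∧ c (Fin.last n) = b ∧
      ∀ i : Fin n, r (c i.castSucc) (c i.succ) := by
  induction h using Relation.ReflTransGen.head_induction_on with
  | refl => exact ⟨0, fun _ => b, rfl, rfl, Fin.elim0⟩
  | @head a a' hstep _ ih =>
    obtain ⟨n, c, h0, hlast, hc⟩ := ih
    refine ⟨n + 1, Fin.cons a c, rfl, by simpa using hlast, Fin.cases ?_ fun i => ?_⟩
    · simpa [h0] using hstep
    · simpa [← Fin.succ_castSucc] using hc i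

open Pointwise
open scoped commutatorElement

namespace Subgroup

section LowerCentralSeries

variable {Q : Type*} [Group Q]

theorem commutator_closure_closure_le {A B : Set Q} {C : Subgroup Q}
    (hcen : ⁅closure A, closure B⁆ ≤ center Q)
    (hAB : ∀ a ∈ A, ∀ b ∈ B, ⁅a, b⁆ ∈ C) :
    ⁅closure A, closure B⁆ ≤ C := by
  have hc : ∀ a ∈ closure A, ∀ b ∈ closure B, ∀ g, Commute g ⁅a, b⁆ :=
    fun a ha b hb => mem_center_iff.mp (hcen (commutator_mem_commutator ha hb))
  rw [commutator_le]
  intro a ha b hb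
  induction ha using closure_induction with
  | mem a ha =>
    induction hb using closure_induction with
    | mem b hb => exact hAB a ha b hb
    | one => simp
    | mul x y _ hy ihx ihy =>
      rw [commutatorElement_mul_right_eq_mul_conj, mul_assoc _ x,
        (hc a (subset_closure ha) y hy x).eq, ← mul_assoc, mul_inv_cancel_right]
      exact mul_mem ihx ihy
    | inv x hx ihx =>
      rw [commutatorElement_inv_right, ← commutatorElement_inv,
        (hc a (subset_closure ha) x hx x⁻¹).inv_right.eq, inv_mul_cancel_right]
      exact inv_mem ihx
  | one => simp
  | mul x y _ hy ihx ihy =>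
    rw [commutatorElement_mul_left_eq_conj_mul, (hc y hy b hb x).eq, mul_inv_cancel_right]
    exact mul_mem ihy ihx
  | inv x hx ihx =>
    rw [commutatorElement_inv_left, ← commutatorElement_inv,
      (hc x hx b hb x⁻¹).inv_right.eq, inv_mul_cancel_right]
    exact inv_mem ihx

variable {H : Type*} [Group H]

/-- Modulo `γᵢ₊₂`, the commutator map `γᵢ × H → γᵢ₊₁` is central-valued, hence
bimultiplicative, and vanishes on `γᵢ₊₁ × H`. -/
theorem lowerCentralSeries_succ_eq_sup_closure_image2 {X T : Set H} (hX : closure X = ⊤)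
    {i : ℕ} (hT : lowerCentralSeries ⊤ i = lowerCentralSeries ⊤ (i + 1) ⊔ closure T) :
    lowerCentralSeries (⊤ : Subgroup H) (i + 1) =
      lowerCentralSeries ⊤ (i + 2) ⊔ closure (Set.image2 (⁅·, ·⁆) T X) := by
  set N := lowerCentralSeries (⊤ : Subgroup H) (i + 2)
  set π := QuotientGroup.mk' N
  have hmap : ∀ j, (lowerCentralSeries ⊤ j).map π = lowerCentralSeries ⊤ j := fun j => by
    rw [map_lowerCentralSeries, map_top_of_surjective _ (QuotientGroup.mk'_surjective _)]
  have hcen : lowerCentralSeries (⊤ : Subgroup (H ⧸ N)) (i + 1) ≤ center (H ⧸ N) := by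
    rw [← commutator_top_right_eq_bot_iff_le_center, ← lowerCentralSeries_succ, ← hmap,
      map_eq_bot_iff, QuotientGroup.ker_mk']
  have hclosure :
      lowerCentralSeries ⊤ (i + 1) ≤ (closure (Set.image2 (⁅·, ·⁆) T X)).map π := by
    have hgen : lowerCentralSeries (⊤ : Subgroup (H ⧸ N)) (i + 1) =
        ⁅closure (((⊤ : Subgroup (H ⧸ N)).lowerCentralSeries (i + 1) : Set (H ⧸ N)) ∪
          π '' T), closure (π '' X)⁆ := by
      rw [closure_union, closure_eq, ← MonoidHom.map_closure, ← MonoidHom.map_closure, hX,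
        ← hmap, ← map_sup, ← hT, ← map_commutator]
      rfl
    rw [hgen]
    refine commutator_closure_closure_le (hgen ▸ hcen) ?_
    rintro a (ha | ⟨t, ht, rfl⟩) _ ⟨x, hx, rfl⟩
    · rw [(commutatorElement_eq_one_iff_commute).mpr (mem_center_iff.mp (hcen ha) _).symm]
      exact one_mem _
    · rw [← map_commutatorElement]
      exact mem_map_of_mem _ (subset_closure (Set.mem_image2_of_mem ht hx))
  refine le_antisymm ?_ (sup_le (lowerCentralSeries_antitone _ (Nat.le_succ _)) ?_)
  · calc lowerCentralSeries ⊤ (i + 1)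
        ≤ ((lowerCentralSeries ⊤ (i + 1)).map π).comap π := le_comap_map _ _
      _ ≤ ((closure (Set.image2 (⁅·, ·⁆) T X)).map π).comap π :=
        comap_mono (hmap _ ▸ hclosure)
      _ = _ := by rw [comap_map_eq, QuotientGroup.ker_mk', sup_comm]
  · rw [closure_le]
    rintro _ ⟨t, ht, x, -, rfl⟩
    exact commutator_mem_commutator (hT ▸ mem_sup_right (subset_closure ht)) (mem_top x)

theorem exists_finite_lowerCentralSeries_eq_sup_closure [Group.FG H] (i : ℕ) :
    ∃ T : Set H, T.Finite ∧
      lowerCentralSeries (⊤ : Subgroup H) i = lowerCentralSeries ⊤ (i + 1) ⊔ closure T := by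
  obtain ⟨X, hX, hXfin⟩ := Group.fg_iff.mp ‹_›
  induction i with
  | zero => exact ⟨X, hXfin, by rw [lowerCentralSeries_zero, hX, sup_top_eq]⟩
  | succ i ih =>
    obtain ⟨T, hTfin, hT⟩ := ih
    exact ⟨_, hTfin.image2 _ hXfin, lowerCentralSeries_succ_eq_sup_closure_image2 hX hT⟩

end LowerCentralSeries

variable {G : Type u} [Group G]

def FiniteOrCyclicStep (K L : Subgroup G) : Prop :=
  K ≤ L ∧ ∃ (Q : Type u) (_ : Group Q) (f : ↥L →* Q),
    Function.Surjective f ∧ f.ker = K.subgroupOf L ∧ (Finite Q ∨ IsCyclic Q)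

theorem FiniteOrCyclicStep.of_normal {K L : Subgroup G} (hKL : K ≤ L)
    [(K.subgroupOf L).Normal]
    (h : Finite (↥L ⧸ K.subgroupOf L) ∨ IsCyclic (↥L ⧸ K.subgroupOf L)) :
    FiniteOrCyclicStep K L :=
  ⟨hKL, _, inferInstance, QuotientGroup.mk' _, QuotientGroup.mk'_surjective _,
    QuotientGroup.ker_mk' _, h⟩

theorem finiteOrCyclicStep_top (N : Subgroup G) [N.Normal] [N.FiniteIndex] :
    FiniteOrCyclicStep N ⊤ :=
  .of_normal le_top (Or.inl finite_quotient_of_finiteIndex)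

theorem finiteOrCyclicStep_sup_zpowers {K : Subgroup G} {z : G}
    (hz : z ∈ normalizer (K : Set G)) : FiniteOrCyclicStep K (K ⊔ zpowers z) := by
  have hzK : zpowers z ≤ normalizer (K : Set G) := zpowers_le.mpr hz
  have hKL : K ≤ K ⊔ zpowers z := le_sup_left
  have := (normal_subgroupOf_iff_le_normalizer hKL).mpr (sup_le le_normalizer hzK)
  let z' : ↥(K ⊔ zpowers z) := ⟨z, mem_sup_right (mem_zpowers z)⟩
  refine .of_normal hKL (Or.inr ⟨⟨z', ?_⟩⟩)
  rintro ⟨⟨y, hy⟩⟩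
  obtain ⟨k, hk, _, ⟨n, rfl⟩, rfl⟩ : y ∈ (K : Set G) * (zpowers z : Set G) := by
    rwa [← coe_mul_of_right_le_normalizer_left K _ hzK]
  refine ⟨n, (QuotientGroup.eq_iff_div_mem).mpr ?_⟩
  simpa [z', mem_subgroupOf, div_eq_mul_inv] using inv_mem hk

theorem reflTransGen_finiteOrCyclicStep_sup_closure (K : Subgroup G) {T : Set G}
    (hT : T.Finite) (hcomm : ⁅closure T, K ⊔ closure T⁆ ≤ K) :
    Relation.ReflTransGen FiniteOrCyclicStep K (K ⊔ closure T) := by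
  induction T, hT using Set.Finite.induction_on with
  | empty => simpa using .refl
  | @insert a s _ _ ih =>
    have hs : closure s ≤ closure (insert a s) := closure_mono (Set.subset_insert a s)
    have ha : a ∈ normalizer ((K ⊔ closure s : Subgroup G) : Set G) := by
      rw [← zpowers_le, le_normalizer_iff_commutator_le_right]
      calc ⁅zpowers a, K ⊔ closure s⁆
          ≤ ⁅closure (insert a s), K ⊔ closure (insert a s)⁆ :=
            commutator_mono (zpowers_le.mpr (subset_closure (Set.mem_insert a s)))
              (sup_le_sup_left hs K)
        _ ≤ K ⊔ closure s := hcomm.trans le_sup_left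
    have hsup : K ⊔ closure s ⊔ zpowers a = K ⊔ closure (insert a s) := by
      rw [Set.insert_eq, closure_union, zpowers_eq_closure, sup_assoc, sup_comm (closure _)]
    refine .tail (ih ((commutator_mono hs (sup_le_sup_left hs K)).trans hcomm)) ?_
    exact hsup ▸ finiteOrCyclicStep_sup_zpowers ha

theorem reflTransGen_finiteOrCyclicStep_sup_lowerCentralSeries (N : Subgroup G) [Group.FG N]
    {H : Subgroup G} (hH : H ≤ N) (i : ℕ) :
    Relation.ReflTransGen FiniteOrCyclicStep
      (H ⊔ N.lowerCentralSeries (i + 1)) (H ⊔ N.lowerCentralSeries i) := by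
  obtain ⟨T, hTfin, hT⟩ := exists_finite_lowerCentralSeries_eq_sup_closure (H := N) i
  replace hT :
      N.lowerCentralSeries i = N.lowerCentralSeries (i + 1) ⊔ closure (N.subtype '' T) := by
    rw [← top_subtype_lowerCentralSeries N i, ← top_subtype_lowerCentralSeries N (i + 1), hT,
      map_sup, MonoidHom.map_closure]
  have hsup : H ⊔ N.lowerCentralSeries (i + 1) ⊔ closure (N.subtype '' T) =
      H ⊔ N.lowerCentralSeries i := by
    rw [sup_assoc, ← hT]
  refine hsup ▸ reflTransGen_finiteOrCyclicStep_sup_closure _ (hTfin.image _) ?_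
  calc ⁅closure (N.subtype '' T),
        H ⊔ N.lowerCentralSeries (i + 1) ⊔ closure (N.subtype '' T)⁆
      ≤ ⁅N.lowerCentralSeries i, N⁆ :=
        commutator_mono (hT ▸ le_sup_right) (hsup ▸ sup_le hH (lowerCentralSeries_le_self N i))
    _ ≤ H ⊔ N.lowerCentralSeries (i + 1) := le_sup_right

theorem reflTransGen_finiteOrCyclicStep_of_le_isNilpotent (N : Subgroup G) [Group.FG N]
    [Group.IsNilpotent N] {H : Subgroup G} (hH : H ≤ N) :
    Relation.ReflTransGen FiniteOrCyclicStep H N := by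
  obtain ⟨n, hn⟩ := (isNilpotent_iff_lowerCentralSeries N).mp ‹_›
  have h : ∀ i, Relation.ReflTransGen FiniteOrCyclicStep (H ⊔ N.lowerCentralSeries i) N := by
    intro i
    induction i with
    | zero => simpa [hH] using .refl
    | succ i ih =>
      exact (reflTransGen_finiteOrCyclicStep_sup_lowerCentralSeries N hH i).trans ih
  simpa [hn] using h n

theorem isNilpotent_of_le {K L : Subgroup G} (hKL : K ≤ L) [Group.IsNilpotent L] :
    Group.IsNilpotent K := by
  obtain ⟨n, hn⟩ := (isNilpotent_iff_lowerCentralSeries L).mp ‹_›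
  exact (isNilpotent_iff_lowerCentralSeries K).mpr
    ⟨n, le_bot_iff.mp (hn ▸ lowerCentralSeries_mono n hKL)⟩

end Subgroup

/-- **Corollary 8.2.** Let `G` be a finitely generated virtually nilpotent group and `S` a
subgroup.  Then there is a subnormal chain `S₀ ≤ S₁ ≤ ⋯ ≤ S_r = G` with `S₀` of finite
index in `S`, each `Sᵢ` normal in `S_{i+1}`, and each quotient `S_{i+1}/Sᵢ` finite or
cyclic. -/
theorem fg_virtually_nilpotent_subnormal_chain
    (G : Type u) [Group G] (hfg : Group.FG G)
    (hvn : ∃ H : Subgroup G, H.FiniteIndex ∧ Group.IsNilpotent ↥H)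
    (S : Subgroup G) :
    ∃ (r : ℕ) (c : Fin (r + 1) → Subgroup G), Monotone c ∧
      c (Fin.last r) = ⊤ ∧ c 0 ≤ S ∧ ((c 0).subgroupOf S).FiniteIndex ∧
      ∀ i : Fin r, ∃ (Q : Type u) (_ : Group Q) (f : ↥(c i.succ) →* Q),
        Function.Surjective f ∧
        MonoidHom.ker f = (c i.castSucc).subgroupOf (c i.succ) ∧
        (Finite Q ∨ IsCyclic Q) := by
  obtain ⟨H, _, _⟩ := hvn
  have : Group.IsNilpotent H.normalCore := Subgroup.isNilpotent_of_le (Subgroup.normalCore_le H)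
  have hreach : Relation.ReflTransGen Subgroup.FiniteOrCyclicStep (S ⊓ H.normalCore) ⊤ :=
    (Subgroup.reflTransGen_finiteOrCyclicStep_of_le_isNilpotent _ inf_le_right).tail
      (Subgroup.finiteOrCyclicStep_top _)
  obtain ⟨r, c, h0, hlast, hstep⟩ := hreach.exists_fin_chain
  refine ⟨r, c, Fin.monotone_iff_le_succ.mpr fun i => (hstep i).1, hlast, h0 ▸ inf_le_left,
    ?_, fun i => (hstep i).2⟩
  rw [h0, Subgroup.inf_subgroupOf_left]
  infer_instance
end

section
/- Let Γ be a limit group containing a nontrivial abelian normal subgroup. Then Γ is abelian. -/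
noncomputable section

universe u

/-- A limit group: a finitely generated group that is fully residually free, i.e. for every
finite subset `T` there is a homomorphism to a finitely generated free group injective on `T`. -/
def IsLimitGroup (L : Type*) [Group L] : Prop :=
  Group.FG L ∧
    ∀ T : Finset L, ∃ (m : ℕ) (f : L →* FreeGroup (Fin m)), Set.InjOn f (T : Set L)

/-! Let `a ∈ A` be nontrivial and let `f` be a map from `Γ` to a free group that is injective on
`{1, a, xy, yx}`. Its image `F` is free (Nielsen–Schreier) and `N = f(A)` is a nontrivial abelian
normal subgroup of `F`. Such an `N` is central: for `n ∈ N` and any `u`, all commutators of the free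
group `⟨n, u⟩` lie in `N`, hence commute, while a free group of rank at least two is not metabelian
(it maps onto `S₅`); so `⟨n, u⟩` is cyclic. A free group of rank at least two has trivial centre:
commuting elements are powers of a common element, so for a central `n ≠ 1`, basis elements
`p ≠ q` and the exponent sum `χ` in `p`, we would get `χ n = 1 ↔ χ p = 1` and `χ n = 1 ↔ χ q = 1`.
Hence `F` is cyclic and `f(xy) = f(yx)`. -/

open scoped commutatorElement

theorem Equiv.Perm.not_commute_commutators_swap_finRotate :
    ¬ Commute ⁅swap (0 : Fin 5) 1, finRotate 5⁆ ⁅swap (0 : Fin 5) 1, (finRotate 5)⁻¹⁆ := by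
  rw [commute_iff_eq]
  decide

namespace IsFreeGroup

open Subgroup

variable {G : Type*} [Group G] [IsFreeGroup G]

theorem isCyclic_of_subsingleton_generators [Subsingleton (Generators G)] : IsCyclic G := by
  have : IsCyclic (FreeGroup (Generators G)) := by
    cases isEmpty_or_nonempty (Generators G)
    · infer_instance
    · have : Unique (Generators G) := uniqueOfSubsingleton (Classical.arbitrary _)
      infer_instance
  exact isCyclic_of_surjective (mulEquiv G) (mulEquiv G).surjective

theorem of_ne_one (x : Generators G) : of x ≠ 1 := by
  intro h
  have := congrArg (lift (H := Multiplicative ℤ) fun _ ↦ .ofAdd 1) h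
  simp only [lift_of, map_one, ofAdd_eq_one] at this
  exact one_ne_zero this

theorem isCyclic_of_commute_commutators (h : ∀ a b c d : G, Commute ⁅a, b⁆ ⁅c, d⁆) :
    IsCyclic G := by
  classical
  by_cases hsub : Subsingleton (Generators G)
  · exact isCyclic_of_subsingleton_generators
  obtain ⟨p, q, hpq⟩ := not_subsingleton_iff_nontrivial.mp hsub
  let φ : G →* Equiv.Perm (Fin 5) :=
    lift fun w ↦ if w = p then Equiv.swap 0 1 else if w = q then finRotate 5 else 1
  have hcomm := (h (of p) (of q) (of p) (of q)⁻¹).map φ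
  rw [map_commutatorElement, map_commutatorElement, map_inv, lift_of, lift_of, if_pos rfl,
    if_neg hpq.symm, if_pos rfl] at hcomm
  exact (Equiv.Perm.not_commute_commutators_swap_finRotate hcomm).elim

theorem isCyclic_of_isMulCommutative [IsMulCommutative G] : IsCyclic G :=
  isCyclic_of_commute_commutators fun a b c d ↦ by
    simp only [commutatorElement_eq_one_iff_mul_comm.mpr (mul_comm' _ _)]
    exact Commute.one_left 1

theorem exists_mem_zpowers_of_commute {a b : G} (h : Commute a b) :
    ∃ r : G, a ∈ zpowers r ∧ b ∈ zpowers r := by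
  let K := closure ({a, b} : Set G)
  have : IsMulCommutative K := isMulCommutative_closure <| by
    rintro _ (rfl | rfl) _ (rfl | rfl) <;> first | rfl | exact h | exact h.symm
  obtain ⟨r, hr⟩ := (isCyclic_of_isMulCommutative (G := K)).exists_generator
  have hK (g : G) (hg : g ∈ K) : g ∈ zpowers (r : G) := by
    obtain ⟨i, hi⟩ := mem_zpowers_iff.mp (hr ⟨g, hg⟩)
    exact ⟨i, by simpa using congrArg Subtype.val hi⟩
  exact ⟨r, hK a (subset_closure (by simp)), hK b (subset_closure (by simp))⟩

theorem map_eq_one_iff_of_commute {H : Type*} [Group H] [IsMulTorsionFree H] (χ : G →* H)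
    {a b : G} (ha : a ≠ 1) (hb : b ≠ 1) (h : Commute a b) : χ a = 1 ↔ χ b = 1 := by
  obtain ⟨r, ⟨i, rfl⟩, ⟨j, rfl⟩⟩ := exists_mem_zpowers_of_commute h
  have hi : i ≠ 0 := by rintro rfl; exact ha (zpow_zero r)
  have hj : j ≠ 0 := by rintro rfl; exact hb (zpow_zero r)
  simp only [map_zpow, IsMulTorsionFree.zpow_eq_one_iff_left hi,
    IsMulTorsionFree.zpow_eq_one_iff_left hj]

theorem isCyclic_of_center_ne_bot (h : center G ≠ ⊥) : IsCyclic G := by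
  classical
  by_cases hsub : Subsingleton (Generators G)
  · exact isCyclic_of_subsingleton_generators
  obtain ⟨p, q, hpq⟩ := not_subsingleton_iff_nontrivial.mp hsub
  exfalso
  obtain ⟨n, hn, hn1⟩ := (center G).bot_or_exists_ne_one.resolve_left h
  let χ : G →* Multiplicative ℤ := lift (Pi.mulSingle p (.ofAdd 1))
  have hχ (x : Generators G) : χ (of x) = 1 ↔ χ n = 1 :=
    map_eq_one_iff_of_commute χ (of_ne_one x) hn1 (mem_center_iff.mp hn (of x))
  have hχp : χ (of p) ≠ 1 := by simp [χ, lift_of]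
  have hχq : χ (of q) = 1 := by simp [χ, lift_of, Pi.mulSingle_eq_of_ne hpq.symm]
  exact hχp ((hχ p).mpr ((hχ q).mp hχq))

theorem le_center_of_isMulCommutative (N : Subgroup G) [N.Normal] [IsMulCommutative N] :
    N ≤ center G := by
  intro n hn
  refine mem_center_iff.mpr fun u ↦ ?_
  let K := closure ({n, u} : Set G)
  have hK : K ≤ (zpowers (u : G ⧸ N)).comap (QuotientGroup.mk' N) := by
    refine (closure_le _).mpr ?_
    rintro _ (rfl | rfl)
    · simp [(QuotientGroup.eq_one_iff _).mpr hn]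
    · exact mem_zpowers _
  have hcommutator (a b : K) : ((⁅a, b⁆ : K) : G) ∈ N := by
    rw [← QuotientGroup.eq_one_iff]
    change QuotientGroup.mk' N ⁅(a : G), (b : G)⁆ = 1
    rw [map_commutatorElement, commutatorElement_eq_one_iff_mul_comm]
    exact setLike_mul_comm (mem_comap.mp (hK a.2)) (mem_comap.mp (hK b.2))
  have : IsCyclic K := isCyclic_of_commute_commutators fun a b c d ↦
    Subtype.ext (setLike_mul_comm (hcommutator a b) (hcommutator c d))
  exact congrArg Subtype.val
    (mul_comm' (⟨u, subset_closure (by simp)⟩ : K) ⟨n, subset_closure (by simp)⟩)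

end IsFreeGroup

/-- A limit group containing a nontrivial abelian normal subgroup is abelian. -/
theorem limit_group_with_nontrivial_abelian_normal_subgroup_is_abelian
    (Γ : Type u) [Group Γ] (hΓ : IsLimitGroup Γ)
    (A : Subgroup Γ) (hnormal : A.Normal) (hA : A ≠ ⊥)
    (hab : ∀ x ∈ A, ∀ y ∈ A, x * y = y * x) :
    ∀ x y : Γ, x * y = y * x := by
  classical
  intro x y
  obtain ⟨a, haA, ha⟩ := A.bot_or_exists_ne_one.resolve_left hA
  obtain ⟨m, f, hf⟩ := hΓ.2 {1, a, x * y, y * x}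
  have : IsMulCommutative A := .of_setLike_mul_comm hab
  have : (A.map f.rangeRestrict).Normal := hnormal.map _ f.rangeRestrict_surjective
  have hfa : f.rangeRestrict a ∈ Subgroup.center f.range :=
    IsFreeGroup.le_center_of_isMulCommutative _ (Subgroup.mem_map_of_mem _ haA)
  have : IsCyclic f.range := IsFreeGroup.isCyclic_of_center_ne_bot fun h ↦
    ha (hf (by simp) (by simp) (by simpa [h, Subtype.ext_iff] using hfa))
  refine hf (by simp) (by simp) ?_
  simpa using congrArg Subtype.val (mul_comm' (f.rangeRestrict x) (f.rangeRestrict y))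
end
end

section
/- Let A be the automorphism of ℤ² given by the matrix [[2,1],[1,1]], let G = ℤ² ⋊ ℤ be the semidirect product in which the generator of ℤ acts by A, and let S be the subgroup {(0, m) : m ∈ ℤ} of G. Then there do NOT exist a finite-index subgroup K of G and a surjective homomorphism f : K → ℤ such that S ∩ K is contained in the kernel of f. (Thus the conclusion of the lemma on finitely generated virtually nilpotent groups fails for this polycyclic group.) -/
noncomputable section

universe u

/-- The automorphism of `ℤ²` given by the matrix `[[2,1],[1,1]]`. -/
def solMatrixAut : (ℤ × ℤ) ≃+ (ℤ × ℤ) where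
  toFun p := (2 * p.1 + p.2, p.1 + p.2)
  invFun p := (p.1 - p.2, -p.1 + 2 * p.2)
  left_inv := by rintro ⟨x, y⟩; simp only [Prod.mk.injEq]; omega
  right_inv := by rintro ⟨x, y⟩; simp only [Prod.mk.injEq]; omega
  map_add' := by rintro ⟨x, y⟩ ⟨a, b⟩; simp only [Prod.fst_add, Prod.snd_add, Prod.mk_add_mk,
    Prod.mk.injEq]; omega

/-- The action of `ℤ` on `ℤ²` in which the generator acts by `solMatrixAut`
(so `k` acts by its `k`-th power). -/
def solAction : Multiplicative ℤ →* MulAut (Multiplicative (ℤ × ℤ)) :=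
  zpowersHom (MulAut (Multiplicative (ℤ × ℤ))) (AddEquiv.toMultiplicative solMatrixAut)

/-- The lattice `G = ℤ² ⋊ ℤ` in the Lie group `Sol` determined by the matrix
`[[2,1],[1,1]]`. -/
abbrev SolLattice : Type :=
  Multiplicative (ℤ × ℤ) ⋊[solAction] Multiplicative ℤ

/-- The subgroup `{(0, m) : m ∈ ℤ}` of `SolLattice`. -/
def solZ : Subgroup SolLattice :=
  (SemidirectProduct.inr : Multiplicative ℤ →* SolLattice).range

/-!
Suppose `f : K → ℤ` kills `solZ ∩ K`. Some power `e ≠ 0` of every element of `G` lies in `K`, so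
`t = (0, e) ∈ K` and `f t = 1`. Since `A` is hyperbolic, `A ^ e - 1` has nonzero determinant `d`,
so for every `v ∈ ℤ²` the multiple `d e v` is the commutator of `t` with an element of `e ℤ² ⊆ K`.
Commutators die in `ℤ`, which is torsion-free, so `f` kills `ℤ² ∩ K`. Finally `k ^ e t ^ (-p)`
lies in `ℤ²` when `p` is the `ℤ`-coordinate of `k`, hence `f k ^ e = 1` and `f` is trivial.
-/

open SemidirectProduct Multiplicative
open scoped commutatorElement

lemma Subgroup.pow_factorial_index_mem {G : Type*} [Group G] {H : Subgroup G} (h : H.index ≠ 0)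
    (g : G) : g ^ H.index.factorial ∈ H :=
  pow_mem_of_index_ne_zero_of_dvd h g fun _ => Nat.dvd_factorial

lemma ofAdd_one_pow (n : ℕ) : ofAdd (1 : ℤ) ^ n = ofAdd (n : ℤ) := by
  rw [← ofAdd_nsmul, nsmul_one]

namespace SemidirectProduct

lemma commutatorElement_inr_inl {N G : Type*} [Group N] [Group G] {φ : G →* MulAut N}
    (g : G) (n : N) : ⁅(inr g : N ⋊[φ] G), (inl n : N ⋊[φ] G)⁆ = inl (φ g n * n⁻¹) := by
  rw [commutatorElement_def, ← map_inv (inr : G →* N ⋊[φ] G), ← inl_aut, map_mul, map_inv]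

lemma eq_one_of_map_inl_eq_one {N M : Type*} [Group N] [CommGroup M] [IsMulTorsionFree M]
    {φ : Multiplicative ℤ →* MulAut N} {K : Subgroup (N ⋊[φ] Multiplicative ℤ)} (f : K →* M)
    {e : ℕ} (he : e ≠ 0) (ht : inr (ofAdd (e : ℤ)) ∈ K) (hft : f ⟨_, ht⟩ = 1)
    (hinl : ∀ n (hn : inl n ∈ K), f ⟨inl n, hn⟩ = 1) : f = 1 := by
  ext k
  set p := toAdd (rightHom (k : N ⋊[φ] Multiplicative ℤ))
  set u : K := k ^ e * ⟨_, ht⟩ ^ (-p)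
  have hu : (u : N ⋊[φ] Multiplicative ℤ) ∈ (inl : N →* _).range := by
    rw [range_inl_eq_ker_rightHom, MonoidHom.mem_ker]
    simp only [u, p, Subgroup.coe_mul, Subgroup.coe_pow, Subgroup.coe_zpow, map_mul, map_pow,
      map_zpow, rightHom_inr]
    apply toAdd.injective
    simp only [toAdd_mul, toAdd_pow, toAdd_zpow, toAdd_ofAdd, toAdd_one, smul_eq_mul, nsmul_eq_mul]
    ring
  obtain ⟨n, hn⟩ := hu
  have hfu : f u = 1 := (congrArg f (Subtype.ext hn.symm)).trans (hinl n (hn ▸ u.2))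
  rwa [map_mul, map_pow, map_zpow, hft, one_zpow, mul_one, pow_eq_one_iff_left he] at hfu

end SemidirectProduct

lemma solAction_natCast_add_one_apply (n : ℕ) : ∃ a b c : ℤ, a = b + c ∧ 0 < b ∧ 0 < c ∧
    a * c - b ^ 2 = 1 ∧ ∀ v : ℤ × ℤ,
      solAction (ofAdd ((n : ℤ) + 1)) (ofAdd v) = ofAdd (a * v.1 + b * v.2, b * v.1 + c * v.2) := by
  have hgen (v : ℤ × ℤ) : solAction (ofAdd 1) (ofAdd v) = ofAdd (2 * v.1 + v.2, v.1 + v.2) := by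
    simp [solAction, solMatrixAut]
  induction n with
  | zero => exact ⟨2, 1, 1, rfl, one_pos, one_pos, rfl, by simpa using hgen⟩
  | succ k ih =>
    obtain ⟨a, b, c, habc, hb, hc, hdet, hA⟩ := ih
    refine ⟨2 * a + b, a + b, a, by omega, by omega, by omega,
      by subst habc; linear_combination hdet, fun v => ?_⟩
    rw [Nat.cast_succ, ofAdd_add, map_mul, MulAut.mul_apply, hgen, hA]
    congr 1
    ext <;> subst habc <;> ring

lemma exists_zpow_eq_solAction_div {n : ℕ} (hn : n ≠ 0) : ∃ d : ℤ, d ≠ 0 ∧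
    ∀ v : Multiplicative (ℤ × ℤ), ∃ w, v ^ d = solAction (ofAdd (n : ℤ)) w / w := by
  obtain ⟨a, b, c, habc, hb, hc, hdet, hA⟩ := solAction_natCast_add_one_apply (n - 1)
  rw [show ((n - 1 : ℕ) : ℤ) + 1 = n by omega] at hA
  -- `d = det (A ^ n - 1) = 2 - tr (A ^ n)` and `w` is the adjugate of `A ^ n - 1` applied to `v`.
  refine ⟨2 - a - c, by omega, fun v => ⟨ofAdd ((c - 1) * (toAdd v).1 - b * (toAdd v).2,
    -b * (toAdd v).1 + (a - 1) * (toAdd v).2), ?_⟩⟩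
  rw [hA]
  apply toAdd.injective
  simp only [toAdd_zpow, toAdd_div, toAdd_ofAdd, Prod.ext_iff, Prod.smul_fst, Prod.smul_snd,
    Prod.fst_sub, Prod.snd_sub, smul_eq_mul]
  constructor
  · linear_combination -(toAdd v).1 * hdet
  · linear_combination -(toAdd v).2 * hdet

lemma solLattice_map_inl_eq_one_of_forall_pow_mem {M : Type*} [CommGroup M] [IsMulTorsionFree M]
    {K : Subgroup SolLattice} (f : K →* M) {e : ℕ} (he : e ≠ 0) (hpow : ∀ g : SolLattice, g ^ e ∈ K)
    (v : Multiplicative (ℤ × ℤ)) (hv : inl v ∈ K) : f ⟨inl v, hv⟩ = 1 := by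
  obtain ⟨d, hd, hvd⟩ := exists_zpow_eq_solAction_div he
  obtain ⟨w, hw⟩ := hvd v
  have hcomm : (⟨inl v, hv⟩ : K) ^ (d * e) =
      ⁅(⟨_, hpow (inr (ofAdd 1))⟩ : K), (⟨_, hpow (inl w)⟩ : K)⁆ := by
    apply Subtype.ext
    rw [← K.coe_subtype, map_zpow, map_commutatorElement, K.coe_subtype]
    show (inl v : SolLattice) ^ (d * e) = ⁅inr (ofAdd 1) ^ e, inl w ^ e⁆
    calc (inl v : SolLattice) ^ (d * e) = inl ((v ^ d) ^ e) := by
          rw [map_pow, map_zpow, zpow_mul, zpow_natCast]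
      _ = inl ((solAction (ofAdd (e : ℤ)) w / w) ^ e) := by rw [hw]
      _ = ⁅inr (ofAdd (e : ℤ)), inl (w ^ e)⁆ := by
          rw [commutatorElement_inr_inl, map_pow (solAction (ofAdd (e : ℤ))), div_pow,
            div_eq_mul_inv]
      _ = ⁅inr (ofAdd (1 : ℤ)) ^ e, inl w ^ e⁆ := by rw [← ofAdd_one_pow, map_pow inr, map_pow inl]
  have : f ⟨inl v, hv⟩ ^ (d * e) = 1 := by
    rw [← map_zpow, hcomm, map_commutatorElement, commutatorElement_eq_one_iff_mul_comm, mul_comm]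
  exact (IsMulTorsionFree.zpow_eq_one_iff_left (mul_ne_zero hd (by exact_mod_cast he))).1 this

/-- The conclusion of Lemma 8.1 fails for the polycyclic group `SolLattice` and its
subgroup `solZ = {(0, m)}`: there is no finite-index subgroup `K ≤ G` with an epimorphism
`f : K → ℤ` killing `solZ ∩ K`. -/
theorem solLattice_no_finite_index_epimorphism_to_Z_killing_solZ :
    ¬ ∃ K : Subgroup SolLattice, K.FiniteIndex ∧
        ∃ f : ↥K →* Multiplicative ℤ, Function.Surjective f ∧
          ∀ (x : SolLattice) (hx : x ∈ K), x ∈ solZ → f ⟨x, hx⟩ = 1 := by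
  rintro ⟨K, hK, f, hsurj, hkill⟩
  set e := K.index.factorial
  have he : e ≠ 0 := Nat.factorial_ne_zero _
  have hpow : ∀ g : SolLattice, g ^ e ∈ K := K.pow_factorial_index_mem hK.index_ne_zero
  have ht : (inr (ofAdd (e : ℤ)) : SolLattice) ∈ K := by
    simpa only [← map_pow, ofAdd_one_pow] using hpow (inr (ofAdd 1))
  have hf : f = 1 := eq_one_of_map_inl_eq_one f he ht (hkill _ ht ⟨_, rfl⟩)
    (solLattice_map_inl_eq_one_of_forall_pow_mem f he hpow)
  obtain ⟨k, hk⟩ := hsurj (ofAdd 1)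
  rw [hf, MonoidHom.one_apply] at hk
  exact absurd (congrArg toAdd hk) (by decide)
end
end
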